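/- If a > α + 1, then the sequence {k + a}_{k=0}^∞ is not an L^{(α)}-multiplier sequence. -/

import Mathlib

open Polynomial

/-- The generalized Laguerre polynomial `L_n^{(α)}(x) = ∑_{k=0}^n binom(n+α, n-k) (-x)^k / k!`. -/
noncomputable def Laguerre (α : ℝ) (n : ℕ) : Polynomial ℝ :=
  ∑ k ∈ Finset.range (n + 1),
    Polynomial.C ((∏ i ∈ Finset.range (n - k), ((n : ℝ) + α - i)) / (Nat.factorial (n - k)) *
      (-1) ^ k / (Nat.factorial k)) * Polynomial.X ^ k

/-- A real polynomial has only real zeros (with the convention that the zero polynomial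
is considered to have only real zeros). -/
def RealRooted (p : Polynomial ℝ) : Prop :=
  p = 0 ∨ ∀ z : ℂ, Polynomial.aeval z p = 0 → z.im = 0

/-- A sequence `γ` is an `L^{(α)}`-multiplier sequence if the linear operator determined by
`T[L_n^{(α)}] = γ_n L_n^{(α)}` maps polynomials with only real zeros to polynomials with
only real zeros. -/
def IsLaguerreMS (α : ℝ) (γ : ℕ → ℝ) : Prop :=
  ∃ T : Polynomial ℝ →ₗ[ℝ] Polynomial ℝ,
    (∀ n, T (Laguerre α n) = γ n • Laguerre α n) ∧
    ∀ p : Polynomial ℝ, RealRooted p → RealRooted (T p)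

/-!
Every operator with `T[L_n^{(α)}] = (n + a) L_n^{(α)}` equals `a - D_α`, where
`D_α = x d²/dx² + (α + 1 - x) d/dx` is the Laguerre operator: `D_α L_n^{(α)} = -n L_n^{(α)}`,
and the `L_n^{(α)}` form a basis. On `(x - t)^N` one gets `(a - D_α)(x - t)^N = (x - t)^(N-2) q_t`
with `q_t` quadratic, and the discriminant of `q_t` is
`(N t + E)² - 4 (N - 1) (a + N) (N (a - α - 1) - a)` with `E = 2a(N - 1) + N(N - α - 2)`.
Since `a > α + 1`, for `N` large and `t = -E/N` it is negative, so `q_t` has non-real zeros.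
-/

noncomputable def laguerreCoeff (α : ℝ) (n k : ℕ) : ℝ :=
  (∏ i ∈ Finset.range (n - k), ((n : ℝ) + α - i)) / (Nat.factorial (n - k)) *
    (-1) ^ k / (Nat.factorial k)

lemma coeff_Laguerre (α : ℝ) (n k : ℕ) :
    (Laguerre α n).coeff k = if k ≤ n then laguerreCoeff α n k else 0 := by
  simp only [Laguerre, finsetSum_coeff, coeff_C_mul, coeff_X_pow, mul_ite, mul_one, mul_zero,
    Finset.sum_ite_eq, Finset.mem_range, Nat.lt_succ_iff]
  rfl

lemma coeff_Laguerre_succ (α : ℝ) (n k : ℕ) :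
    ((k : ℝ) + 1) * ((k : ℝ) + α + 1) * (Laguerre α n).coeff (k + 1)
      = ((k : ℝ) - n) * (Laguerre α n).coeff k := by
  rw [coeff_Laguerre, coeff_Laguerre]
  rcases lt_trichotomy k n with hkn | rfl | hnk
  · obtain ⟨m, rfl⟩ : ∃ m, n = k + 1 + m := ⟨n - (k + 1), by omega⟩
    rw [if_pos (by omega), if_pos (by omega), laguerreCoeff, laguerreCoeff,
      show k + 1 + m - (k + 1) = m by omega, show k + 1 + m - k = m + 1 by omega,
      Finset.prod_range_succ, Nat.factorial_succ, Nat.factorial_succ]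
    push_cast
    field_simp
    ring
  · simp
  · simp [show ¬ k ≤ n by omega, show ¬ k + 1 ≤ n by omega]

lemma degree_Laguerre (α : ℝ) (n : ℕ) : (Laguerre α n).degree = n := by
  refine degree_eq_of_le_of_coeff_ne_zero ?_ ?_
  · rw [degree_le_iff_coeff_zero]
    intro k hk
    rw [coeff_Laguerre, if_neg (by exact_mod_cast hk.not_ge)]
  · rw [coeff_Laguerre, if_pos le_rfl]
    simp [laguerreCoeff, Nat.factorial_ne_zero]

noncomputable def laguerreSequence (α : ℝ) : Polynomial.Sequence ℝ :=
  ⟨Laguerre α, degree_Laguerre α⟩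

lemma span_range_Laguerre (α : ℝ) : Submodule.span ℝ (Set.range (Laguerre α)) = ⊤ :=
  (laguerreSequence α).span fun n => isUnit_iff_ne_zero.mpr
    (leadingCoeff_ne_zero.mpr ((laguerreSequence α).ne_zero n))

noncomputable def laguerreOp (α : ℝ) : ℝ[X] →ₗ[ℝ] ℝ[X] :=
  LinearMap.mulLeft ℝ X ∘ₗ derivative ∘ₗ derivative +
    LinearMap.mulLeft ℝ (C (α + 1) - X) ∘ₗ derivative

lemma laguerreOp_apply (α : ℝ) (p : ℝ[X]) :
    laguerreOp α p = X * derivative (derivative p) + (C (α + 1) - X) * derivative p :=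
  rfl

lemma coeff_X_mul_derivative {R : Type*} [Semiring R] (p : R[X]) (k : ℕ) :
    (X * derivative p).coeff k = k * p.coeff k := by
  cases k with
  | zero => simp
  | succ k => rw [coeff_X_mul, coeff_derivative, ← Nat.cast_succ, Nat.cast_comm]

lemma laguerreOp_Laguerre (α : ℝ) (n : ℕ) :
    laguerreOp α (Laguerre α n) = -(n : ℝ) • Laguerre α n := by
  ext k
  have hrec := coeff_Laguerre_succ α n k
  simp only [laguerreOp_apply, coeff_add, sub_mul, coeff_sub, coeff_C_mul, coeff_smul,
    coeff_X_mul_derivative, coeff_derivative, smul_eq_mul] at hrec ⊢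
  linear_combination hrec

lemma eq_smul_id_sub_laguerreOp (α a : ℝ) (T : ℝ[X] →ₗ[ℝ] ℝ[X])
    (hT : ∀ n : ℕ, T (Laguerre α n) = ((n : ℝ) + a) • Laguerre α n) :
    T = a • LinearMap.id - laguerreOp α :=
  LinearMap.ext_on_range (span_range_Laguerre α) fun n => by
    rw [hT, LinearMap.sub_apply, laguerreOp_Laguerre, LinearMap.smul_apply, LinearMap.id_apply,
      ← sub_smul]
    congr 1
    ring

lemma smul_id_sub_laguerreOp_X_sub_C_pow (α a t : ℝ) (n : ℕ) :
    (a • LinearMap.id - laguerreOp α : ℝ[X] →ₗ[ℝ] ℝ[X]) ((X - C t) ^ (n + 2)) =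
      (X - C t) ^ n * (C (a + (n + 2)) * X ^ 2
        + C (-(2 * a + (n + 2)) * t - (n + 2) * (α + (n + 2))) * X
        + C (a * t ^ 2 + (n + 2) * (α + 1) * t)) := by
  simp only [LinearMap.sub_apply, LinearMap.smul_apply, LinearMap.id_apply, laguerreOp_apply,
    derivative_X_sub_C_pow, derivative_C_mul, smul_eq_C_mul]
  simp only [map_add, map_sub, map_mul, map_neg, map_pow, map_one, map_natCast, map_ofNat]
  push_cast
  ring

lemma realRooted_X_sub_C_pow (t : ℝ) (n : ℕ) : RealRooted ((X - C t) ^ n) := by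
  refine Or.inr fun z hz => ?_
  simp only [map_pow, map_sub, aeval_X, aeval_C, Complex.coe_algebraMap] at hz
  rw [sub_eq_zero.mp (pow_eq_zero_iff'.mp hz).1, Complex.ofReal_im]

lemma RealRooted.of_mul_left {p q : ℝ[X]} (h : RealRooted (p * q)) (hp : p ≠ 0) :
    RealRooted q := by
  rcases h with h | h
  · exact Or.inl ((mul_eq_zero.mp h).resolve_left hp)
  · exact Or.inr fun z hz => h z (by rw [map_mul, hz, mul_zero])

lemma not_realRooted_of_discrim_neg {a b c : ℝ} (h : discrim a b c < 0) :
    ¬ RealRooted (C a * X ^ 2 + C b * X + C c) := by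
  have ha : a ≠ 0 := by
    rintro rfl
    simp only [discrim, mul_zero, zero_mul, sub_zero] at h
    exact (sq_nonneg b).not_gt h
  have hdeg : (C a * X ^ 2 + C b * X + C c).degree = 2 := by compute_degree!
  rintro (h0 | hreal)
  · simp [h0] at hdeg
  obtain ⟨z, hz⟩ :=
    Complex.exists_root (f := (C a * X ^ 2 + C b * X + C c).map (algebraMap ℝ ℂ))
      (by rw [degree_map, hdeg]; norm_num)
  rw [IsRoot, eval_map_algebraMap] at hz
  have hzreal : (z.re : ℂ) = z := Complex.ext rfl (by simp [hreal z hz])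
  have hroot : a * (z.re * z.re) + b * z.re + c = 0 := by
    rw [← hzreal] at hz
    simp only [map_add, map_mul, map_pow, aeval_C, aeval_X, Complex.coe_algebraMap] at hz
    exact_mod_cast (by push_cast; linear_combination hz :
      ((a * (z.re * z.re) + b * z.re + c : ℝ) : ℂ) = 0)
  rw [discrim_eq_sq_of_quadratic_eq_zero hroot] at h
  exact (sq_nonneg _).not_gt h

lemma exists_discrim_neg {K : Type*} [Field K] [LinearOrder K] [IsStrictOrderedRing K]
    {α a N : K} (hN : 1 < N) (haN : 0 < a + N) (hNa : a < N * (a - α - 1)) :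
    ∃ t : K,
      discrim (a + N) (-(2 * a + N) * t - N * (α + N)) (a * t ^ 2 + N * (α + 1) * t) < 0 := by
  set E := 2 * a * (N - 1) + N * (N - α - 2)
  have hdiscrim : ∀ t : K,
      discrim (a + N) (-(2 * a + N) * t - N * (α + N)) (a * t ^ 2 + N * (α + 1) * t)
        = (N * t + E) ^ 2 - 4 * ((N - 1) * (a + N) * (N * (a - α - 1) - a)) := by
    intro t
    rw [discrim]
    ring
  refine ⟨-E / N, ?_⟩
  rw [hdiscrim, mul_div_cancel₀ _ (by positivity), neg_add_cancel, sq, zero_mul, zero_sub,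
    neg_neg_iff_pos]
  have : 0 < N * (a - α - 1) - a := sub_pos.mpr hNa
  have : 0 < N - 1 := sub_pos.mpr hN
  positivity

theorem linear_not_laguerre_ms_of_gt_general (α a : ℝ) (ha : a > α + 1) :
    ¬ IsLaguerreMS α (fun k => (k : ℝ) + a) := by
  rintro ⟨T, hT, hreal⟩
  rw [eq_smul_id_sub_laguerreOp α a T hT] at hreal
  obtain ⟨n, hn⟩ := exists_nat_gt (max (-a) (a / (a - α - 1)))
  obtain ⟨hna, hnα⟩ := max_lt_iff.mp hn
  have hNα : a < (n + 2) * (a - α - 1) := by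
    have := (div_lt_iff₀ (by linarith : (0 : ℝ) < a - α - 1)).mp hnα
    nlinarith
  obtain ⟨t, ht⟩ := exists_discrim_neg (N := (n : ℝ) + 2)
    (by linarith [n.cast_nonneg (α := ℝ)]) (by linarith) hNα
  have hTp := hreal _ (realRooted_X_sub_C_pow t (n + 2))
  rw [smul_id_sub_laguerreOp_X_sub_C_pow] at hTp
  exact not_realRooted_of_discrim_neg ht (hTp.of_mul_left (pow_ne_zero _ (X_sub_C_ne_zero t)))

/-- If `a > α + 1`, then `{k + a}` is not an `L^{(α)}`-multiplier sequence. -/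
theorem linear_not_laguerre_ms_of_gt (α a : ℝ) (hα : -1 < α) (ha : a > α + 1) :
    ¬ IsLaguerreMS α (fun k => (k : ℝ) + a) :=
  linear_not_laguerre_ms_of_gt_general α a ha
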